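/- arXiv:1711.00929 — 2 statements merged into one kernel-verified Lean document; each statement's English description precedes it below -/
import Mathlib

section
/- If a curvature tensor is both projectively flat (Θ_{i j̄ k l̄} = (1/n) Θ^{(1)}_{k l̄} h_{i j̄}) and satisfies Θ^{(1)} = Θ^{(3)} (first Ricci equals third Ricci), and n ≥ 2, then Θ^{(1)} = 0 and Θ^{(3)} = 0, and consequently Θ = 0. -/
open Finset
open scoped ComplexOrder

/-!
Contracting the projectively flat identity `Θ_{i j̄ k l̄} = (1/n) Θ^{(1)}_{k l̄} h_{i j̄}` over the
indices `j̄, k` with `h^{k j̄}` collapses `h` against its inverse and gives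
`Θ^{(3)} = (1/n) Θ^{(1)}`. Together with `Θ^{(1)} = Θ^{(3)}` this says `(1 - 1/n) Θ^{(1)} = 0`,
so `Θ^{(1)} = 0` as soon as `n ≠ 1`, and then `Θ` itself vanishes.
-/

theorem sum_sum_inv_mul_mul_eq {ι R : Type*} [Fintype ι] [DecidableEq ι] [CommSemiring R]
    (h hinv : Matrix ι ι R) (hinverse : ∀ k i, (∑ j, hinv k j * h i j) = if k = i then 1 else 0)
    (T : ι → ι → R) (i l : ι) :
    ∑ k, ∑ j, hinv k j * (T k l * h i j) = T i l := by
  calc ∑ k, ∑ j, hinv k j * (T k l * h i j)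
      = ∑ k, T k l * ∑ j, hinv k j * h i j := by
        simp only [mul_sum]
        exact sum_congr rfl fun _ _ => sum_congr rfl fun _ _ => by ring
    _ = T i l := by simp only [hinverse, mul_ite, mul_one, mul_zero, sum_ite_eq', mem_univ,
        if_true]

theorem eq_zero_of_eq_one_div_natCast_mul {K : Type*} [Field K] [CharZero K] {n : ℕ}
    (hn : n ≠ 1) {x : K} (hx : x = 1 / n * x) : x = 0 := by
  have hne : (1 : K) - 1 / n ≠ 0 := by
    rw [sub_ne_zero, ne_comm, one_div, Ne, inv_eq_one, Nat.cast_eq_one]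
    exact hn
  exact (mul_eq_zero.mp (by linear_combination hx : (1 - 1 / (n : K)) * x = 0)).resolve_left hne

theorem projectively_flat_with_first_eq_third_ricci_is_flat_general
    {n : ℕ} (hn : 2 ≤ n)
    (h hinv : Matrix (Fin n) (Fin n) ℂ)
    (hinverse : ∀ k i, (∑ j, hinv k j * h i j) = if k = i then 1 else 0)
    (Θ : Fin n → Fin n → Fin n → Fin n → ℂ)
    (Ric1 : Fin n → Fin n → ℂ)
    (Ric3 : Fin n → Fin n → ℂ)
    (hRic3 : ∀ i l, Ric3 i l = ∑ k, ∑ j, hinv k j * Θ i j k l)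
    (hpf : ∀ i j k l, Θ i j k l = (1 / (n : ℂ)) * Ric1 k l * h i j)
    (heq : ∀ a b, Ric1 a b = Ric3 a b) :
    (∀ a b, Ric1 a b = 0) ∧ (∀ a b, Ric3 a b = 0) ∧
      (∀ i j k l, Θ i j k l = 0) := by
  have hRic3_eq : ∀ a b, Ric3 a b = 1 / (n : ℂ) * Ric1 a b := fun a b => by
    simp_rw [hRic3, hpf]
    exact sum_sum_inv_mul_mul_eq h hinv hinverse (fun k l => 1 / (n : ℂ) * Ric1 k l) a b
  have hRic1_zero : ∀ a b, Ric1 a b = 0 := fun a b =>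
    eq_zero_of_eq_one_div_natCast_mul (by omega) ((heq a b).trans (hRic3_eq a b))
  refine ⟨hRic1_zero, fun a b => (heq a b).symm.trans (hRic1_zero a b), fun i j k l => ?_⟩
  rw [hpf, hRic1_zero, mul_zero, zero_mul]

/-- A projectively flat tensor whose first and third Ricci tensors
agree must be flat: `Θ^{(1)} = Θ^{(3)} = 0` and `Θ = 0` (for `n ≥ 2`). -/
theorem projectively_flat_with_first_eq_third_ricci_is_flat
    {n : ℕ} (hn : 2 ≤ n)
    (h hinv : Matrix (Fin n) (Fin n) ℂ)
    (hpos : h.PosDef)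
    (hinverse : ∀ k i, (∑ j, hinv k j * h i j) = if k = i then 1 else 0)
    (Θ : Fin n → Fin n → Fin n → Fin n → ℂ)
    (Ric1 : Fin n → Fin n → ℂ)
    (hRic1 : ∀ k l, Ric1 k l = ∑ i, ∑ j, hinv i j * Θ i j k l)
    (Ric3 : Fin n → Fin n → ℂ)
    (hRic3 : ∀ i l, Ric3 i l = ∑ k, ∑ j, hinv k j * Θ i j k l)
    (hpf : ∀ i j k l, Θ i j k l = (1 / (n : ℂ)) * Ric1 k l * h i j)
    (heq : ∀ a b, Ric1 a b = Ric3 a b) :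
    (∀ a b, Ric1 a b = 0) ∧ (∀ a b, Ric3 a b = 0) ∧
      (∀ i j k l, Θ i j k l = 0) :=
  projectively_flat_with_first_eq_third_ricci_is_flat_general hn h hinv hinverse Θ Ric1 Ric3 hRic3
    hpf heq
end

section
/- If h is simultaneously Kähler (∂h_{i j̄}/∂z^k = ∂h_{k j̄}/∂z^i for all indices) and projectively flat on an open subset of ℂⁿ with n ≥ 2, then the curvature symmetry Θ_{i j̄ k l̄} = Θ_{k j̄ i l̄} forces (1/n) ρ_{k l̄} h_{i j̄} = (1/n) ρ_{i l̄} h_{k j̄} for all indices, and for n ≥ 2 this implies ρ = λ h for a function λ and then, contracting suitably, Θ_{i j̄ k l̄} = (λ/n)·h h, which combined with the Kähler Bianchi symmetry Θ_{i j̄ k l̄} = Θ_{i l̄ k j̄} yields λ·(h_{i j̄} h_{k l̄} − h_{i l̄} h_{k j̄}) = 0 and hence, for n ≥ 2, λ = 0 and Θ = 0. That is: a Kähler projectively flat metric is Chern flat. -/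
open scoped ComplexOrder

/-! The symmetry `Θ_{ij̄kl̄} = Θ_{il̄kj̄}` says `ρ_{kl̄} h_{ij̄} = ρ_{kj̄} h_{il̄}`: for `j ≠ l`,
the vector `ρ_{kl̄} e_j - ρ_{kj̄} e_l` lies in the kernel of `h`. A positive definite matrix
is invertible, so that vector vanishes, and in particular `ρ_{kl̄} = 0`. -/

namespace Matrix.PosDef

variable {m K : Type*} [Fintype m] [DecidableEq m] [Field K] [PartialOrder K] [StarRing K]

theorem eq_zero_of_smul_col_eq_smul_col {M : Matrix m m K} (hM : M.PosDef) {j l : m}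
    (hjl : j ≠ l) {a b : K} (hab : ∀ i, a * M i j = b * M i l) : a = 0 := by
  have hker : M *ᵥ (Pi.single j a - Pi.single l b) = M *ᵥ 0 := by
    ext i
    simp [mulVec_sub, mulVec_single, hab]
  simpa [hjl] using congrFun (mulVec_injective_of_isUnit hM.isUnit hker) j

end Matrix.PosDef

theorem kahler_projectively_flat_is_chern_flat_general
    {n : ℕ} (hn : 2 ≤ n)
    (h ρ : Matrix (Fin n) (Fin n) ℂ)
    (hpos : h.PosDef)
    (Θ : Fin n → Fin n → Fin n → Fin n → ℂ)
    (hΘ : ∀ i j k l, Θ i j k l = (1 / (n : ℂ)) * ρ k l * h i j)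
    (hsym2 : ∀ i j k l, Θ i j k l = Θ i l k j) :
    ρ = 0 ∧ ∀ i j k l, Θ i j k l = 0 := by
  have hρ : ρ = 0 := by
    ext k l
    have : Nontrivial (Fin n) := Fin.nontrivial_iff_two_le.mpr hn
    obtain ⟨j, hjl⟩ := exists_ne l
    refine hpos.eq_zero_of_smul_col_eq_smul_col hjl (b := ρ k j) fun i ↦ ?_
    have hn0 : (n : ℂ) ≠ 0 := Nat.cast_ne_zero.mpr (by omega)
    have hsym := hsym2 i j k l
    rw [hΘ, hΘ, mul_assoc, mul_assoc] at hsym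
    exact mul_left_cancel₀ (one_div_ne_zero hn0) hsym
  exact ⟨hρ, fun i j k l ↦ by simp [hΘ, hρ]⟩

/-- (Algebraic core of: a Kähler projectively flat metric is
Chern flat.) If the tensor `Θ_{ij̄kl̄} = (1/n) ρ_{kl̄} h_{ij̄}` satisfies the two
Kähler curvature symmetries `Θ_{ij̄kl̄} = Θ_{kj̄il̄}` and `Θ_{ij̄kl̄} = Θ_{il̄kj̄}`
with `n ≥ 2` and `h` positive definite, then `ρ = 0` and `Θ = 0`. -/
theorem kahler_projectively_flat_is_chern_flat
    {n : ℕ} (hn : 2 ≤ n)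
    (h ρ : Matrix (Fin n) (Fin n) ℂ)
    (hpos : h.PosDef)
    (Θ : Fin n → Fin n → Fin n → Fin n → ℂ)
    (hΘ : ∀ i j k l, Θ i j k l = (1 / (n : ℂ)) * ρ k l * h i j)
    (hsym1 : ∀ i j k l, Θ i j k l = Θ k j i l)
    (hsym2 : ∀ i j k l, Θ i j k l = Θ i l k j) :
    ρ = 0 ∧ ∀ i j k l, Θ i j k l = 0 :=
  kahler_projectively_flat_is_chern_flat_general hn h ρ hpos Θ hΘ hsym2
end
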